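/- Let P ⊂ ℝⁿ be a compact convex set with nonempty interior and let G : int P → ℝ be a convex function, so that G is differentiable at Lebesgue-almost every point of int P. Suppose there is a constant C > 0 such that ‖∇G(s)‖ ≤ C · log(C / dist(s, ∂P)) for almost every s ∈ int P. Then there exists ε > 0 such that ∫_{int P} e^{ε‖∇G(s)‖} ds < +∞. -/

import Mathlib

/-!
Since `‖∇G‖ ≤ C log (C / d)` with `d = dist(·, ∂P)`, choosing `ε = δ / C` gives
`exp (ε ‖∇G‖) ≤ 1 + C^δ d^(-δ)`, so it suffices that `d^(-δ)` is integrable on `int P` for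
`0 < δ < 1`. By the layer-cake formula this follows from the tail bound
`|{d < r}| = O(r)`: if the ball `B(x₀, ρ)` lies in `P`, the homothetic copy of `P` of ratio
`1 - r/ρ` about `x₀` stays at distance `≥ r` from `∂P`, and it has volume `(1 - r/ρ)^n |P|`.
-/

open MeasureTheory Filter Metric Set Module

theorem lintegral_ofReal_lt_top_of_meas_lt_le_rpow {α : Type*} [MeasurableSpace α]
    {μ : Measure α} [IsFiniteMeasure μ] {f : α → ℝ} (hf0 : 0 ≤ᵐ[μ] f) (hf : AEMeasurable f μ)
    {K p : ℝ} (hp : 1 < p)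
    (htail : ∀ᶠ t in atTop, μ {x | t < f x} ≤ ENNReal.ofReal (K * t ^ (-p))) :
    ∫⁻ x, ENNReal.ofReal (f x) ∂μ < ⊤ := by
  obtain ⟨T, hT⟩ := eventually_atTop.1 (htail.and (eventually_ge_atTop 1))
  have hT1 : 1 ≤ T := (hT T le_rfl).2
  rw [lintegral_eq_lintegral_meas_lt μ hf0 hf, ← Ioc_union_Ioi_eq_Ioi (by positivity : 0 ≤ T),
    lintegral_union measurableSet_Ioi (Ioc_disjoint_Ioi le_rfl)]
  refine ENNReal.add_lt_top.2 ⟨?_, ?_⟩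
  · calc ∫⁻ t in Ioc 0 T, μ {x | t < f x} ≤ ∫⁻ _ in Ioc 0 T, μ univ :=
          lintegral_mono fun _ => measure_mono (subset_univ _)
      _ < ⊤ := by simp [ENNReal.mul_lt_top, measure_lt_top]
  · calc ∫⁻ t in Ioi T, μ {x | t < f x} ≤ ∫⁻ t in Ioi T, ENNReal.ofReal (K * t ^ (-p)) :=
          setLIntegral_mono' measurableSet_Ioi fun t ht => (hT t ht.le).1
      _ < ⊤ := ((integrableOn_Ioi_rpow_of_lt (by linarith) (by positivity)).const_mul K
          ).lintegral_lt_top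

theorem le_infDist_frontier_of_ball_subset {X : Type*} [PseudoMetricSpace X] {P : Set X}
    (hfr : (frontier P).Nonempty) {y : X} {r : ℝ} (h : ball y r ⊆ P) :
    r ≤ infDist y (frontier P) := by
  refine (le_infDist hfr).2 fun z hz => not_lt.1 fun hzy => hz.2 ?_
  exact interior_maximal h isOpen_ball (mem_ball'.2 hzy)

/-- The `1 +` covers `d = 0`, where `log (C / d) = log 0 = 0`. -/
theorem Real.exp_mul_le_one_add_rpow_neg_of_le_mul_log {C d x δ : ℝ} (hC : 0 < C) (hd : 0 ≤ d)
    (hδ : 0 ≤ δ) (hx : x ≤ C * Real.log (C / d)) :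
    Real.exp (δ / C * x) ≤ 1 + C ^ δ * d ^ (-δ) := by
  rcases hd.eq_or_lt with rfl | hd
  · simp only [div_zero, Real.log_zero, mul_zero] at hx
    exact le_add_of_le_of_nonneg (Real.exp_le_one_iff.2 (mul_nonpos_of_nonneg_of_nonpos
      (by positivity) hx)) (by positivity)
  calc Real.exp (δ / C * x) ≤ Real.exp (Real.log (C / d) * δ) := Real.exp_le_exp.2 (by
        calc δ / C * x ≤ δ / C * (C * Real.log (C / d)) := by gcongr
          _ = Real.log (C / d) * δ := by field_simp)
    _ = C ^ δ * d ^ (-δ) := by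
        rw [← Real.rpow_def_of_pos (div_pos hC hd), Real.div_rpow hC.le hd.le,
          Real.rpow_neg hd.le, div_eq_mul_inv]
    _ ≤ 1 + C ^ δ * d ^ (-δ) := le_add_of_nonneg_left zero_le_one

section AddHaar

variable {E : Type*} [NormedAddCommGroup E] [NormedSpace ℝ E]

theorem Convex.closedBall_lineMap_subset {P : Set E} (hP : Convex ℝ P) {x₀ p : E} {ρ t : ℝ}
    (hball : closedBall x₀ ρ ⊆ P) (hp : p ∈ P) (ht0 : 0 < t) (ht1 : t ≤ 1) :
    closedBall (AffineMap.lineMap p x₀ t) (t * ρ) ⊆ P := by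
  intro z hz
  set q := x₀ + t⁻¹ • (z - AffineMap.lineMap p x₀ t)
  have hq : q ∈ closedBall x₀ ρ := by
    rw [mem_closedBall, dist_eq_norm, add_sub_cancel_left, norm_smul, Real.norm_eq_abs,
      abs_inv, abs_of_pos ht0, inv_mul_le_iff₀ ht0, ← dist_eq_norm]
    exact hz
  have hz_eq : AffineMap.lineMap p q t = z := by
    simp only [q, AffineMap.lineMap_apply_module]
    match_scalars <;> field_simp <;> ring
  exact hz_eq ▸ hP.lineMap_mem hp (hball hq) ⟨ht0.le, ht1⟩

variable [MeasurableSpace E] [BorelSpace E] [FiniteDimensional ℝ E] (μ : Measure E)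
  [μ.IsAddHaarMeasure]

theorem Convex.addHaar_infDist_frontier_lt_le {P : Set E} (hPc : IsCompact P) (hP : Convex ℝ P)
    {x₀ : E} {ρ : ℝ} (hρ : 0 ≤ ρ) (hball : closedBall x₀ ρ ⊆ P) (hfr : (frontier P).Nonempty)
    {t : ℝ} (ht0 : 0 < t) (ht1 : t ≤ 1) :
    μ {s ∈ interior P | infDist s (frontier P) < t * ρ} ≤
      ENNReal.ofReal (finrank ℝ E * t) * μ P := by
  set H := AffineMap.homothety x₀ (1 - t) '' P
  have homothety_eq (p : E) : AffineMap.homothety x₀ (1 - t) p = AffineMap.lineMap p x₀ t := by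
    rw [AffineMap.homothety_eq_lineMap, AffineMap.lineMap_apply_one_sub]
  have hH : H ⊆ {s | t * ρ ≤ infDist s (frontier P)} := by
    rintro _ ⟨p, hp, rfl⟩
    rw [homothety_eq]
    exact le_infDist_frontier_of_ball_subset hfr
      (ball_subset_closedBall.trans (hP.closedBall_lineMap_subset hball hp ht0 ht1))
  have hHP : H ⊆ P := by
    rintro _ ⟨p, hp, rfl⟩
    rw [homothety_eq]
    exact hP.lineMap_mem hp (hball (mem_closedBall_self hρ)) ⟨ht0.le, ht1⟩
  have hshell : {s ∈ interior P | infDist s (frontier P) < t * ρ} ⊆ P \ H :=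
    fun s hs => ⟨interior_subset hs.1, fun hsH => (hH hsH).not_gt hs.2⟩
  have hbernoulli : 1 - (1 - t) ^ finrank ℝ E ≤ finrank ℝ E * t := by
    have := one_add_mul_le_pow (a := -t) (by linarith) (finrank ℝ E)
    simp only [mul_neg, ← sub_eq_add_neg] at this
    linarith
  calc μ {s ∈ interior P | infDist s (frontier P) < t * ρ} ≤ μ (P \ H) := measure_mono hshell
    _ = μ P - ENNReal.ofReal ((1 - t) ^ finrank ℝ E) * μ P := by
      have hHc : IsCompact H :=
        hPc.image (AffineMap.homothety x₀ (1 - t)).continuous_of_finiteDimensional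
      rw [measure_sdiff hHP hHc.measurableSet.nullMeasurableSet hHc.measure_lt_top.ne,
        Measure.addHaar_image_homothety, abs_of_nonneg (by bound)]
    _ = ENNReal.ofReal (1 - (1 - t) ^ finrank ℝ E) * μ P := by
      rw [ENNReal.ofReal_sub _ (by bound), ENNReal.ofReal_one,
        ENNReal.sub_mul fun _ _ => hPc.measure_lt_top.ne, one_mul]
    _ ≤ ENNReal.ofReal (finrank ℝ E * t) * μ P := by gcongr

theorem Convex.lintegral_infDist_frontier_rpow_neg_lt_top {P : Set E} (hPc : IsCompact P)
    (hP : Convex ℝ P) (hPint : (interior P).Nonempty) {δ : ℝ} (hδ0 : 0 < δ) (hδ1 : δ < 1) :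
    ∫⁻ s in interior P, ENNReal.ofReal (infDist s (frontier P) ^ (-δ)) ∂μ < ⊤ := by
  obtain ⟨x₀, hx₀⟩ := hPint
  obtain ⟨ρ, hρ, hball⟩ := nhds_basis_closedBall.mem_iff.1 (mem_interior_iff_mem_nhds.1 hx₀)
  rcases (frontier P).eq_empty_or_nonempty with hfr | hfr
  · simp [hfr, Real.zero_rpow (neg_ne_zero.2 hδ0.ne')]
  have : IsFiniteMeasure (μ.restrict (interior P)) := isFiniteMeasure_restrict.2
    ((measure_mono interior_subset).trans_lt hPc.measure_lt_top).ne
  refine lintegral_ofReal_lt_top_of_meas_lt_le_rpow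
    (ae_of_all _ fun _ => Real.rpow_nonneg infDist_nonneg _)
    ((continuous_infDist_pt _).measurable.pow_const _).aemeasurable (one_lt_inv₀ hδ0 |>.2 hδ1)
    (K := finrank ℝ E / ρ * (μ P).toReal) ?_
  filter_upwards [eventually_gt_atTop (ρ ^ (-δ))] with t ht
  have ht0 : 0 < t := (Real.rpow_pos_of_pos hρ _).trans ht
  have hδneg : -δ < 0 := neg_lt_zero.2 hδ0
  set r := t ^ (-δ)⁻¹
  have hrρ : r ≤ ρ := (Real.rpow_inv_le_iff_of_neg ht0 hρ hδneg).2 ht.le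
  have hsub : {s | t < infDist s (frontier P) ^ (-δ)} ∩ interior P ⊆
      {s ∈ interior P | infDist s (frontier P) < r / ρ * ρ} := by
    rintro s ⟨hts : t < infDist s (frontier P) ^ (-δ), hs⟩
    have hd : 0 < infDist s (frontier P) := by
      refine infDist_nonneg.lt_of_ne fun h => ?_
      rw [← h, Real.zero_rpow hδneg.ne] at hts
      exact ht0.not_gt hts
    exact ⟨hs, (div_mul_cancel₀ r hρ.ne').symm ▸
      (Real.lt_rpow_inv_iff_of_neg hd ht0 hδneg).2 hts⟩
  calc μ.restrict (interior P) {s | t < infDist s (frontier P) ^ (-δ)}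
      ≤ μ {s ∈ interior P | infDist s (frontier P) < r / ρ * ρ} := by
        rw [Measure.restrict_apply' isOpen_interior.measurableSet]
        exact measure_mono hsub
    _ ≤ ENNReal.ofReal (finrank ℝ E * (r / ρ)) * μ P :=
        hP.addHaar_infDist_frontier_lt_le μ hPc hρ.le hball hfr (by positivity)
          ((div_le_one hρ).2 hrρ)
    _ = ENNReal.ofReal (finrank ℝ E / ρ * (μ P).toReal * t ^ (-δ⁻¹)) := by
        rw [← ENNReal.ofReal_toReal hPc.measure_lt_top.ne, ← ENNReal.ofReal_mul (by positivity),
          ENNReal.ofReal_toReal hPc.measure_lt_top.ne]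
        simp only [r, inv_neg]
        ring_nf

end AddHaar

theorem gradient_log_bound_implies_exp_integrable_general
    (n : ℕ) (P : Set (EuclideanSpace ℝ (Fin n)))
    (hPc : IsCompact P) (hPconv : Convex ℝ P) (hPint : (interior P).Nonempty)
    (G : EuclideanSpace ℝ (Fin n) → ℝ)
    (C : ℝ) (hC : 0 < C)
    (hbound : ∀ᵐ s ∂(volume.restrict (interior P)),
      ‖gradient G s‖ ≤ C * Real.log (C / Metric.infDist s (frontier P))) :
    ∃ ε > (0:ℝ),
      ∫⁻ s in interior P, ENNReal.ofReal (Real.exp (ε * ‖gradient G s‖)) ∂volume < ⊤ := by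
  set δ : ℝ := 1 / 2
  have hdist := hPconv.lintegral_infDist_frontier_rpow_neg_lt_top volume hPc hPint
    (δ := δ) (by norm_num) (by norm_num)
  refine ⟨δ / C, by positivity, ?_⟩
  calc ∫⁻ s in interior P, ENNReal.ofReal (Real.exp (δ / C * ‖gradient G s‖))
      ≤ ∫⁻ s in interior P, (1 + ENNReal.ofReal (C ^ δ) *
          ENNReal.ofReal (infDist s (frontier P) ^ (-δ))) := by
        refine lintegral_mono_ae (hbound.mono fun s hs => ?_)
        rw [← ENNReal.ofReal_one, ← ENNReal.ofReal_mul (by positivity),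
          ← ENNReal.ofReal_add zero_le_one
            (mul_nonneg (by positivity) (Real.rpow_nonneg infDist_nonneg _))]
        exact ENNReal.ofReal_le_ofReal
          (Real.exp_mul_le_one_add_rpow_neg_of_le_mul_log hC infDist_nonneg (by norm_num) hs)
    _ = volume (interior P) + ENNReal.ofReal (C ^ δ) *
          ∫⁻ s in interior P, ENNReal.ofReal (infDist s (frontier P) ^ (-δ)) := by
        rw [lintegral_add_left measurable_const, lintegral_const_mul' _ _ ENNReal.ofReal_ne_top,
          setLIntegral_one]
    _ < ⊤ := ENNReal.add_lt_top.2 ⟨(measure_mono interior_subset).trans_lt hPc.measure_lt_top,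
          ENNReal.mul_lt_top ENNReal.ofReal_lt_top hdist⟩

/-- Let `P ⊂ ℝⁿ` be compact convex with nonempty interior and
`G : int P → ℝ` convex. If there is `C > 0` such that
`‖∇G(s)‖ ≤ C log(C / dist(s, ∂P))` for almost every `s ∈ int P`, then there is `ε > 0`
with `∫_{int P} e^{ε ‖∇G(s)‖} ds < +∞`. -/
theorem gradient_log_bound_implies_exp_integrable
    (n : ℕ) (P : Set (EuclideanSpace ℝ (Fin n)))
    (hPc : IsCompact P) (hPconv : Convex ℝ P) (hPint : (interior P).Nonempty)
    (G : EuclideanSpace ℝ (Fin n) → ℝ) (hconv : ConvexOn ℝ (interior P) G)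
    (C : ℝ) (hC : 0 < C)
    (hbound : ∀ᵐ s ∂(volume.restrict (interior P)),
      ‖gradient G s‖ ≤ C * Real.log (C / Metric.infDist s (frontier P))) :
    ∃ ε > (0:ℝ),
      ∫⁻ s in interior P, ENNReal.ofReal (Real.exp (ε * ‖gradient G s‖)) ∂volume < ⊤ :=
  gradient_log_bound_implies_exp_integrable_general n P hPc hPconv hPint G C hC hbound
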